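/- arXiv:1807.06476 — 2 statements merged into one kernel-verified Lean document; each statement's English description precedes it below -/
import Mathlib

section
/- Let T be a linear operator on M_{m×n}(S) that preserves the rank of every rank-1 matrix, and suppose there exist permutations ρ of {1,…,m} and σ of {1,…,n} and units α_{ij} of S with T(E_{ij}) = α_{ij} E_{ρ(i),σ(j)} for all (i,j) (or m = n and T(E_{ij}) = α_{ij} E_{σ(j),ρ(i)} for all (i,j)). Then α_{ij}·α_{lk} = α_{lj}·α_{ik} for all i, l ∈ {1,…,m} and j, k ∈ {1,…,n}; consequently there exist units c₁,…,c_m and d₁,…,d_n of S such that α_{ij} = cᵢ·d_j for all (i,j), i.e., there are invertible diagonal matrices C (m×m) and D (n×n) with α_{ij} = C_{ii}·D_{jj}. -/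
/-!
The matrix `E_ij + E_ik + E_lj + E_lk` (for `i ≠ l`, `j ≠ k`) is the rank-one matrix `u vᵀ` with
`u`, `v` the indicator vectors of `{i, l}` and `{j, k}`, so its image
`α_ij E_{π(i,j)} + α_ik E_{π(i,k)} + α_lj E_{π(l,j)} + α_lk E_{π(l,k)}` has rank one as well,
where `π(p, q)` is `(ρ p, σ q)` or `(σ q, ρ p)`. The four positions are the corners of a
rectangle, and the `2 × 2` minors of a rank-one matrix vanish, which gives
`α_ij α_lk = α_lj α_ik`. Normalizing at a fixed entry `(i₀, j₀)`, `c_i = α_{i j₀} α_{i₀ j₀}⁻¹`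
and `d_j = α_{i₀ j}` factor `α`.
-/

open scoped Classical

/-- The semiring rank of an `m × n` matrix over `S`: the least positive `k` such that
`A = B * C` for some `m × k` matrix `B` and `k × n` matrix `C`; the rank of `0` is `0`. -/
noncomputable def matRank {S : Type*} [CommSemiring S] {m n : ℕ}
    (A : Matrix (Fin m) (Fin n) S) : ℕ :=
  if A = 0 then 0
  else sInf {k : ℕ | 0 < k ∧
    ∃ (B : Matrix (Fin m) (Fin k) S) (C : Matrix (Fin k) (Fin n) S), A = B * C}

open Matrix

section RankOne

variable {S : Type*} [CommSemiring S] {m n : ℕ}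

theorem matRank_eq_one_iff {A : Matrix (Fin m) (Fin n) S} :
    matRank A = 1 ↔ A ≠ 0 ∧ ∃ u v, A = vecMulVec u v := by
  set F := {k : ℕ | 0 < k ∧
    ∃ (B : Matrix (Fin m) (Fin k) S) (C : Matrix (Fin k) (Fin n) S), A = B * C}
  have one_mem_iff : 1 ∈ F ↔ ∃ u v, A = vecMulVec u v := by
    refine ⟨fun ⟨_, B, C, hBC⟩ => ⟨fun i => B i 0, C 0, ?_⟩, fun ⟨u, v, huv⟩ => ?_⟩
    · rw [hBC]
      ext p q
      simp [mul_apply, vecMulVec_apply]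
    · exact ⟨one_pos, _, _, huv.trans (vecMulVec_eq (Fin 1) u v)⟩
  have sInf_eq_one_iff : sInf F = 1 ↔ 1 ∈ F := by
    refine ⟨fun h => ?_, fun h => le_antisymm (Nat.sInf_le h) (Nat.sInf_mem ⟨1, h⟩).1⟩
    have hF : F.Nonempty := Set.nonempty_iff_ne_empty.2 fun hF => by simp [hF] at h
    exact h ▸ Nat.sInf_mem hF
  unfold matRank
  split_ifs with hA
  · simp [hA]
  · rw [sInf_eq_one_iff, one_mem_iff]
    exact and_iff_right hA |>.symm

theorem mul_eq_mul_of_matRank_eq_one {B : Matrix (Fin m) (Fin n) S} (hB : matRank B = 1)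
    (a a' : Fin m) (b b' : Fin n) : B a b * B a' b' = B a' b * B a b' := by
  obtain ⟨-, u, v, rfl⟩ := matRank_eq_one_iff.1 hB
  simp only [vecMulVec_apply]
  ring

theorem matRank_single_add_single_add_single_add_single [Nontrivial S] {i l : Fin m}
    {j k : Fin n} (hil : i ≠ l) (hjk : j ≠ k) :
    matRank (single i j (1 : S) + single i k 1 + single l j 1 + single l k 1) = 1 := by
  refine matRank_eq_one_iff.2 ⟨fun h => ?_, Pi.single i 1 + Pi.single l 1,
    Pi.single j 1 + Pi.single k 1, ?_⟩
  · simpa [single_apply, hil.symm, hjk.symm] using congr_fun₂ h i j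
  · simp only [add_vecMulVec, vecMulVec_add, single_eq_single_vecMulVec_single]
    abel

theorem mul_eq_mul_of_matRank_smul_single_add {a a' : Fin m} {b b' : Fin n}
    (ha : a ≠ a') (hb : b ≠ b') {x y z w : S}
    (h : matRank (x • single a b (1 : S) + y • single a b' 1 + z • single a' b 1 +
      w • single a' b' 1) = 1) :
    x * w = z * y := by
  simpa [single_apply, ha, hb, ha.symm, hb.symm] using mul_eq_mul_of_matRank_eq_one h a a' b b'

end RankOne

section MonomialMaps

variable {S : Type*} [CommSemiring S] {m n m' n' : ℕ}
  {T : Matrix (Fin m) (Fin n) S →ₗ[S] Matrix (Fin m') (Fin n') S} {α : Fin m → Fin n → S}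

theorem mul_eq_mul_of_map_single {ρ : Fin m → Fin m'} {σ : Fin n → Fin n'}
    (hT : ∀ A, matRank A = 1 → matRank (T A) = 1) (hρ : ρ.Injective) (hσ : σ.Injective)
    (hE : ∀ i j, T (single i j 1) = α i j • single (ρ i) (σ j) 1)
    (i l : Fin m) (j k : Fin n) : α i j * α l k = α l j * α i k := by
  rcases subsingleton_or_nontrivial S with _ | _
  · exact Subsingleton.elim _ _
  rcases eq_or_ne i l with rfl | hil
  · rfl
  rcases eq_or_ne j k with rfl | hjk
  · exact mul_comm _ _
  have h := hT _ (matRank_single_add_single_add_single_add_single hil hjk)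
  rw [map_add, map_add, map_add, hE, hE, hE, hE] at h
  exact mul_eq_mul_of_matRank_smul_single_add (hρ.ne hil) (hσ.ne hjk) h

theorem mul_eq_mul_of_map_single_transpose {ρ : Fin m → Fin n'} {σ : Fin n → Fin m'}
    (hT : ∀ A, matRank A = 1 → matRank (T A) = 1) (hρ : ρ.Injective) (hσ : σ.Injective)
    (hE : ∀ i j, T (single i j 1) = α i j • single (σ j) (ρ i) 1)
    (i l : Fin m) (j k : Fin n) : α i j * α l k = α l j * α i k := by
  rcases subsingleton_or_nontrivial S with _ | _
  · exact Subsingleton.elim _ _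
  rcases eq_or_ne i l with rfl | hil
  · rfl
  rcases eq_or_ne j k with rfl | hjk
  · exact mul_comm _ _
  have h := hT _ (matRank_single_add_single_add_single_add_single hil hjk)
  rw [map_add, map_add, map_add, hE, hE, hE, hE, add_right_comm (α i j • _)] at h
  rw [mul_eq_mul_of_matRank_smul_single_add (hσ.ne hjk) (hρ.ne hil) h, mul_comm]

end MonomialMaps

theorem exists_isUnit_mul_of_mul_eq_mul {ι κ S : Type*} [CommMonoid S] {α : ι → κ → S}
    (hα : ∀ i j, IsUnit (α i j)) (h : ∀ i l j k, α i j * α l k = α l j * α i k) :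
    ∃ (c : ι → S) (d : κ → S), (∀ i, IsUnit (c i)) ∧ (∀ j, IsUnit (d j)) ∧
      ∀ i j, α i j = c i * d j := by
  rcases isEmpty_or_nonempty (ι × κ) with _ | ⟨i₀, j₀⟩
  · exact ⟨1, 1, fun _ => isUnit_one, fun _ => isUnit_one, fun i j => isEmptyElim (i, j)⟩
  obtain ⟨u, hu⟩ := hα i₀ j₀
  refine ⟨fun i => α i j₀ * ↑u⁻¹, fun j => α i₀ j, fun i => (hα i j₀).mul u⁻¹.isUnit,
    fun j => hα i₀ j, fun i j => ?_⟩
  rw [mul_right_comm, Units.eq_mul_inv_iff_mul_eq, hu, h, mul_comm]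

theorem stmt10_general {S : Type*} [CommSemiring S]
    {m n : ℕ}
    (T : Matrix (Fin m) (Fin n) S →ₗ[S] Matrix (Fin m) (Fin n) S)
    (h1 : ∀ A : Matrix (Fin m) (Fin n) S, matRank A = 1 → matRank (T A) = 1)
    (ρ : Equiv.Perm (Fin m)) (σ : Equiv.Perm (Fin n)) (α : Fin m → Fin n → S)
    (hα : ∀ i j, IsUnit (α i j))
    (hform : (∀ (i : Fin m) (j : Fin n),
        T (Matrix.single i j 1) = α i j • Matrix.single (ρ i) (σ j) 1) ∨
      (∃ h : m = n, ∀ (i : Fin m) (j : Fin n),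
        T (Matrix.single i j 1) =
          α i j • Matrix.single (Fin.cast h.symm (σ j)) (Fin.cast h (ρ i)) 1)) :
    (∀ (i l : Fin m) (j k : Fin n), α i j * α l k = α l j * α i k) ∧
    ∃ (c : Fin m → S) (d : Fin n → S),
      (∀ i, IsUnit (c i)) ∧ (∀ j, IsUnit (d j)) ∧
      (∀ (i : Fin m) (j : Fin n), α i j = c i * d j) ∧
      ∃ (C : Matrix (Fin m) (Fin m) S) (D : Matrix (Fin n) (Fin n) S),
        C = Matrix.diagonal c ∧ D = Matrix.diagonal d ∧ IsUnit C ∧ IsUnit D ∧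
        ∀ (i : Fin m) (j : Fin n), α i j = C i i * D j j := by
  have hminor : ∀ i l j k, α i j * α l k = α l j * α i k := by
    rcases hform with hE | ⟨hmn, hE⟩
    · exact mul_eq_mul_of_map_single h1 ρ.injective σ.injective hE
    · exact mul_eq_mul_of_map_single_transpose h1 ((Fin.cast_injective hmn).comp ρ.injective)
        ((Fin.cast_injective hmn.symm).comp σ.injective) hE
  obtain ⟨c, d, hc, hd, hcd⟩ := exists_isUnit_mul_of_mul_eq_mul hα hminor
  refine ⟨hminor, c, d, hc, hd, hcd, diagonal c, diagonal d, rfl, rfl,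
    (Pi.isUnit_iff.2 hc).map (diagonalRingHom (Fin m) S),
    (Pi.isUnit_iff.2 hd).map (diagonalRingHom (Fin n) S), fun i j => ?_⟩
  simp only [diagonal_apply_eq, hcd]

theorem stmt10 {S : Type*} [CommSemiring S]
    (haddidem : ∀ a : S, a + a = a)
    (hmc : ∀ a b c : S, a ≠ 0 → b * a = c * a → b = c)
    (haui : ∀ a b : S, IsUnit (a + b) → IsUnit a ∨ IsUnit b)
    {m n : ℕ}
    (T : Matrix (Fin m) (Fin n) S →ₗ[S] Matrix (Fin m) (Fin n) S)
    (h1 : ∀ A : Matrix (Fin m) (Fin n) S, matRank A = 1 → matRank (T A) = 1)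
    (ρ : Equiv.Perm (Fin m)) (σ : Equiv.Perm (Fin n)) (α : Fin m → Fin n → S)
    (hα : ∀ i j, IsUnit (α i j))
    (hform : (∀ (i : Fin m) (j : Fin n),
        T (Matrix.single i j 1) = α i j • Matrix.single (ρ i) (σ j) 1) ∨
      (∃ h : m = n, ∀ (i : Fin m) (j : Fin n),
        T (Matrix.single i j 1) =
          α i j • Matrix.single (Fin.cast h.symm (σ j)) (Fin.cast h (ρ i)) 1)) :
    (∀ (i l : Fin m) (j k : Fin n), α i j * α l k = α l j * α i k) ∧
    ∃ (c : Fin m → S) (d : Fin n → S),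
      (∀ i, IsUnit (c i)) ∧ (∀ j, IsUnit (d j)) ∧
      (∀ (i : Fin m) (j : Fin n), α i j = c i * d j) ∧
      ∃ (C : Matrix (Fin m) (Fin m) S) (D : Matrix (Fin n) (Fin n) S),
        C = Matrix.diagonal c ∧ D = Matrix.diagonal d ∧ IsUnit C ∧ IsUnit D ∧
        ∀ (i : Fin m) (j : Fin n), α i j = C i i * D j j :=
  stmt10_general T h1 ρ σ α hα hform
end

section
/- Let m > 1 and n > 1, and let A and B be two distinct m×n matrices over S with r(A) = r(B) = 1. If the number of nonzero entries of A equals the number of nonzero entries of B, then there exists an m×n matrix C over S such that either r(A + C) = 1 and r(B + C) = 2, or r(A + C) = 2 and r(B + C) = 1. -/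
open scoped Classical

/-- The number of nonzero entries of a matrix. -/
noncomputable def nnz {S : Type*} [Zero S] {m n : ℕ} (A : Matrix (Fin m) (Fin n) S) : ℕ :=
  Nat.card {p : Fin m × Fin n // A p.1 p.2 ≠ 0}

open Matrix

section Helpers

variable {S : Type*} [CommSemiring S] {m n : ℕ}


lemma matRank_eq_one_of {M : Matrix (Fin m) (Fin n) S} (hM : M ≠ 0)
    (a : Fin m → S) (b : Fin n → S) (h : ∀ i j, M i j = a i * b j) :
    matRank M = 1 := by
  have h1 : 1 ∈ {k : ℕ | 0 < k ∧ ∃ (B : Matrix (Fin m) (Fin k) S)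
      (C : Matrix (Fin k) (Fin n) S), M = B * C} := by
    refine ⟨Nat.one_pos, Matrix.of (fun i _ => a i), Matrix.of (fun _ j => b j), ?_⟩
    ext i j
    simp [Matrix.mul_apply, h i j]
  rw [matRank, if_neg hM]
  exact le_antisymm (Nat.sInf_le h1) (Nat.sInf_mem ⟨1, h1⟩).1

lemma matRank_eq_two_of {M : Matrix (Fin m) (Fin n) S}
    (w1 w2 : Fin m → S) (z1 z2 : Fin n → S)
    (h : ∀ i j, M i j = w1 i * z1 j + w2 i * z2 j)
    (p k : Fin m) (q l : Fin n)
    (hc : M p q * M k l ≠ M p l * M k q) : matRank M = 2 := by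
  have hM : M ≠ 0 := by
    rintro rfl
    simp at hc
  rw [matRank, if_neg hM]
  set T := {k : ℕ | 0 < k ∧ ∃ (B : Matrix (Fin m) (Fin k) S)
      (C : Matrix (Fin k) (Fin n) S), M = B * C} with hT
  have h2 : 2 ∈ T := by
    refine ⟨by norm_num, Matrix.of (fun i => ![w1 i, w2 i]),
      Matrix.of ![z1, z2], ?_⟩
    ext i j
    simp [Matrix.mul_apply, Fin.sum_univ_two, h i j]
  have h1 : 1 ∉ T := by
    rintro ⟨-, B, C, hBC⟩
    apply hc
    have e : ∀ i j, M i j = B i 0 * C 0 j := by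
      intro i j
      rw [hBC]
      simp [Matrix.mul_apply]
    rw [e p q, e k l, e p l, e k q]
    ring
  have hmem := Nat.sInf_mem (⟨2, h2⟩ : T.Nonempty)
  have hle : sInf T ≤ 2 := Nat.sInf_le h2
  have hpos : 0 < sInf T := hmem.1
  have hne1 : sInf T ≠ 1 := fun e => h1 (e ▸ hmem)
  omega

lemma exists_outer_of_matRank_eq_one {M : Matrix (Fin m) (Fin n) S}
    (h : matRank M = 1) :
    M ≠ 0 ∧ ∃ (a : Fin m → S) (b : Fin n → S), ∀ i j, M i j = a i * b j := by
  have hM : M ≠ 0 := by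
    rintro rfl
    rw [matRank, if_pos rfl] at h
    omega
  refine ⟨hM, ?_⟩
  rw [matRank, if_neg hM] at h
  set T := {k : ℕ | 0 < k ∧ ∃ (B : Matrix (Fin m) (Fin k) S)
      (C : Matrix (Fin k) (Fin n) S), M = B * C} with hT
  have hne : T.Nonempty := by
    by_contra hemp
    rw [Set.not_nonempty_iff_eq_empty] at hemp
    rw [hemp, Nat.sInf_empty] at h
    omega
  have hmem := Nat.sInf_mem hne
  rw [h] at hmem
  obtain ⟨-, B, C, hBC⟩ := hmem
  refine ⟨fun i => B i 0, fun j => C 0 j, fun i j => ?_⟩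
  rw [hBC]
  simp [Matrix.mul_apply]

lemma matRank_transpose (M : Matrix (Fin m) (Fin n) S) : matRank Mᵀ = matRank M := by
  by_cases hM : M = 0
  · subst hM
    simp [matRank]
  · have hMt : Mᵀ ≠ 0 := fun h => hM (by
      have := congrArg Matrix.transpose h
      simpa using this)
    rw [matRank, matRank, if_neg hM, if_neg hMt]
    congr 1
    ext k
    constructor
    · rintro ⟨hk, B, C, hBC⟩
      refine ⟨hk, Cᵀ, Bᵀ, ?_⟩
      rw [← Matrix.transpose_mul, ← hBC, Matrix.transpose_transpose]
    · rintro ⟨hk, B, C, hBC⟩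
      refine ⟨hk, Cᵀ, Bᵀ, ?_⟩
      rw [← Matrix.transpose_mul, ← hBC]



variable {S : Type*} [CommSemiring S] {m n : ℕ}

lemma zs_of (hid : ∀ a : S, a + a = a) : ∀ a b : S, a + b = 0 → a = 0 := by
  intro a b h
  have h2 : a + (a + b) = a + b := by rw [← add_assoc, hid]
  rw [h, add_zero] at h2
  exact h2

lemma nzd_of (hmc : ∀ a b c : S, a ≠ 0 → b * a = c * a → b = c) :
    ∀ x y : S, x ≠ 0 → y * x = 0 → y = 0 := by
  intro x y hx h
  exact hmc x y 0 hx (by rw [h, zero_mul])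

lemma supp_reverse (A B : Matrix (Fin m) (Fin n) S)
    (hnnz : nnz A = nnz B) (hsub : ∀ k l, A k l ≠ 0 → B k l ≠ 0) :
    ∀ k l, B k l ≠ 0 → A k l ≠ 0 := by
  have hA : nnz A = ({p : Fin m × Fin n | A p.1 p.2 ≠ 0} : Set _).ncard :=
    Nat.card_coe_set_eq _
  have hB : nnz B = ({p : Fin m × Fin n | B p.1 p.2 ≠ 0} : Set _).ncard :=
    Nat.card_coe_set_eq _
  have hsub' : {p : Fin m × Fin n | A p.1 p.2 ≠ 0} ⊆ {p : Fin m × Fin n | B p.1 p.2 ≠ 0} :=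
    fun p hp => hsub p.1 p.2 hp
  have heq := Set.eq_of_subset_of_ncard_le hsub'
    (by rw [← hA, ← hB, hnnz]) (Set.toFinite _)
  intro k l h
  have : (⟨k, l⟩ : Fin m × Fin n) ∈ {p : Fin m × Fin n | A p.1 p.2 ≠ 0} := by
    rw [heq]; exact h
  exact this

lemma confine (hmc : ∀ a b c : S, a ≠ 0 → b * a = c * a → b = c)
    (M : Matrix (Fin m) (Fin n) S) (u : Fin m → S) (v : Fin n → S)
    (hM : ∀ i j, M i j = u i * v j) (p : Fin m) (q : Fin n)
    (hK : ∀ k l, k ≠ p → l ≠ q → M k l = 0) :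
    (∀ k, k ≠ p → ∀ l, M k l = 0) ∨ (∀ l, l ≠ q → ∀ k, M k l = 0) := by
  by_cases hrow : ∀ k, k ≠ p → ∀ l, M k l = 0
  · exact Or.inl hrow
  · push_neg at hrow
    obtain ⟨k, hk, l, hkl⟩ := hrow
    have hlq : l = q := by
      by_contra hlq
      exact hkl (hK k l hk hlq)
    subst hlq
    refine Or.inr (fun l' hl' k' => ?_)
    rcases eq_or_ne k' p with rfl | hk'
    · have h0 : M k l' = 0 := hK k l' hk hl'
      have hcross : M k' l' * M k l = M k' l * M k l' := by
        rw [hM, hM, hM, hM]; ring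
      rw [h0, mul_zero] at hcross
      exact nzd_of hmc (M k l) (M k' l') hkl hcross
    · exact hK k' l' hk' hl'


lemma mat_ne_zero_of_entry (M : Matrix (Fin m) (Fin n) S) (i : Fin m) (j : Fin n)
    (h : M i j ≠ 0) : M ≠ 0 := fun h0 => h (by rw [h0]; rfl)



lemma step4row (hid : ∀ a : S, a + a = a)
    (hmc : ∀ a b c : S, a ≠ 0 → b * a = c * a → b = c)
    (hm : 1 < m) (hn : 1 < n)
    (A B : Matrix (Fin m) (Fin n) S)
    (hA1 : matRank A = 1) (hB1 : matRank B = 1) (hAB : A ≠ B)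
    (i0 : Fin m) (hrow : ∀ k, k ≠ i0 → ∀ l, A k l = 0 ∧ B k l = 0) :
    ∃ C : Matrix (Fin m) (Fin n) S,
      (matRank (A + C) = 1 ∧ matRank (B + C) = 2) ∨
      (matRank (A + C) = 2 ∧ matRank (B + C) = 1) := by
  have hA0 : A ≠ 0 := by
    intro h; rw [h, matRank, if_pos rfl] at hA1; omega
  have hB0 : B ≠ 0 := by
    intro h; rw [h, matRank, if_pos rfl] at hB1; omega
  obtain ⟨i1, hi1⟩ : ∃ i1 : Fin m, i1 ≠ i0 :=
    Fintype.exists_ne_of_one_lt_card (by simpa using hm) i0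
  obtain ⟨p, hp⟩ : ∃ p, A i0 p ≠ B i0 p := by
    by_contra h
    push_neg at h
    apply hAB
    ext k l
    by_cases hk : k = i0
    · rw [hk]; exact h l
    · rw [(hrow k hk l).1, (hrow k hk l).2]
  by_cases hpar : ∀ l l', A i0 l * B i0 l' = A i0 l' * B i0 l
  · -- parallel case
    have hβp : A i0 p ≠ 0 := by
      intro h0
      have hδp : B i0 p ≠ 0 := fun h1 => hp (h0.trans h1.symm)
      apply hA0
      ext k l
      by_cases hk : k = i0
      · rw [hk]
        have h2 := hpar l p
        rw [h0, zero_mul] at h2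
        exact nzd_of hmc _ _ hδp h2
      · exact (hrow k hk l).1
    have hδp : B i0 p ≠ 0 := by
      intro h0
      apply hB0
      ext k l
      by_cases hk : k = i0
      · rw [hk]
        have h2 := hpar p l
        rw [h0, mul_zero] at h2
        have h3 : B i0 l * A i0 p = 0 := by rw [mul_comm]; exact h2
        exact nzd_of hmc _ _ hβp h3
      · exact (hrow k hk l).2
    by_cases hq : ∃ q, q ≠ p ∧ (A i0 q ≠ 0 ∨ B i0 q ≠ 0)
    · -- 4b-i : second nonzero column
      obtain ⟨q, hqp, hor⟩ := hq
      have hβq : A i0 q ≠ 0 := by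
        intro h0
        have h1 := hpar q p
        rw [h0, zero_mul] at h1
        have h2 : B i0 q * A i0 p = 0 := by rw [mul_comm]; exact h1.symm
        have hδq : B i0 q = 0 := nzd_of hmc _ _ hβp h2
        rcases hor with h | h
        · exact h h0
        · exact h hδq
      have hδq : B i0 q ≠ 0 := by
        intro h0
        have h1 := hpar p q
        rw [h0, mul_zero] at h1
        exact hβq (nzd_of hmc _ _ hδp h1.symm)
      have hβδq : A i0 q ≠ B i0 q := by
        intro heq
        have h1 := hpar p q
        rw [← heq] at h1
        have h2 : A i0 p * A i0 q = B i0 p * A i0 q := by rw [h1]; ring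
        exact hp (hmc _ _ _ hβq h2)
      by_cases hst : A i0 q + B i0 q ≠ A i0 q
      · -- C1 : A side stays rank 1, B side becomes rank 2
        set M : Matrix (Fin m) (Fin n) S := Matrix.of (fun r s => if r = i0 then (if s = q then B i0 q else 0)
            else if r = i1 then (A i0 s + if s = q then B i0 q else 0) else 0) with hM
        refine ⟨M, Or.inl ⟨?_, ?_⟩⟩
        · apply matRank_eq_one_of (a := fun r => if r = i0 ∨ r = i1 then 1 else 0)
            (b := fun s => A i0 s + if s = q then B i0 q else 0)
          · apply mat_ne_zero_of_entry _ i0 q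
            have hne : (A i0 q + B i0 q) ≠ 0 := fun h => hβq (zs_of hid _ _ h)
            simpa [hM, Matrix.add_apply] using hne
          · intro i j
            by_cases h0 : i = i0
            · rw [h0]; simp [hM, Matrix.add_apply]
            · by_cases h1 : i = i1
              · rw [h1]; simp [hM, Matrix.add_apply, hi1, (hrow i1 hi1 j).1]
              · simp [hM, Matrix.add_apply, h0, h1, (hrow i h0 j).1]
        · apply matRank_eq_two_of
            (w1 := fun r => if r = i0 then 1 else 0)
            (z1 := fun s => B i0 s + if s = q then B i0 q else 0)
            (w2 := fun r => if r = i1 then 1 else 0)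
            (z2 := fun s => A i0 s + if s = q then B i0 q else 0)
            (p := i0) (k := i1) (q := p) (l := q)
          · intro i j
            by_cases h0 : i = i0
            · rw [h0]; simp [hM, Matrix.add_apply, Ne.symm hi1]
            · by_cases h1 : i = i1
              · rw [h1]; simp [hM, Matrix.add_apply, hi1, (hrow i1 hi1 j).2]
              · simp [hM, Matrix.add_apply, h0, h1, (hrow i h0 j).2]
          · have e1 : (B + M) i0 p = B i0 p := by
              simp [hM, Matrix.add_apply, hqp, Ne.symm hqp]
            have e2 : (B + M) i1 q = A i0 q + B i0 q := by
              simp [hM, Matrix.add_apply, hi1, (hrow i1 hi1 q).2]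
            have e3 : (B + M) i0 q = B i0 q := by
              simp [hM, Matrix.add_apply, hid]
            have e4 : (B + M) i1 p = A i0 p := by
              simp [hM, Matrix.add_apply, hi1, hqp, Ne.symm hqp, (hrow i1 hi1 p).2]
            rw [e1, e2, e3, e4]
            intro heq
            apply hst
            have h2 : B i0 q * A i0 p = B i0 p * A i0 q := by
              rw [mul_comm (B i0 q) (A i0 p), hpar p q]; ring
            have h3 : (A i0 q + B i0 q) * B i0 p = A i0 q * B i0 p := by
              calc (A i0 q + B i0 q) * B i0 p = B i0 p * (A i0 q + B i0 q) := by ring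
              _ = B i0 q * A i0 p := heq
              _ = A i0 q * B i0 p := by rw [h2]; ring
            exact hmc _ _ _ hδp h3
      · -- C2 : mirror
        push_neg at hst
        have hst2 : B i0 q + A i0 q ≠ B i0 q := by
          intro h2
          apply hβδq
          calc A i0 q = A i0 q + B i0 q := hst.symm
          _ = B i0 q + A i0 q := by ring
          _ = B i0 q := h2
        set M : Matrix (Fin m) (Fin n) S := Matrix.of (fun r s => if r = i0 then (if s = q then A i0 q else 0)
            else if r = i1 then (B i0 s + if s = q then A i0 q else 0) else 0) with hM
        refine ⟨M, Or.inr ⟨?_, ?_⟩⟩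
        · apply matRank_eq_two_of
            (w1 := fun r => if r = i0 then 1 else 0)
            (z1 := fun s => A i0 s + if s = q then A i0 q else 0)
            (w2 := fun r => if r = i1 then 1 else 0)
            (z2 := fun s => B i0 s + if s = q then A i0 q else 0)
            (p := i0) (k := i1) (q := p) (l := q)
          · intro i j
            by_cases h0 : i = i0
            · rw [h0]; simp [hM, Matrix.add_apply, Ne.symm hi1]
            · by_cases h1 : i = i1
              · rw [h1]; simp [hM, Matrix.add_apply, hi1, (hrow i1 hi1 j).1]
              · simp [hM, Matrix.add_apply, h0, h1, (hrow i h0 j).1]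
          · have e1 : (A + M) i0 p = A i0 p := by
              simp [hM, Matrix.add_apply, hqp, Ne.symm hqp]
            have e2 : (A + M) i1 q = B i0 q + A i0 q := by
              simp [hM, Matrix.add_apply, hi1, (hrow i1 hi1 q).1]
            have e3 : (A + M) i0 q = A i0 q := by
              simp [hM, Matrix.add_apply, hid]
            have e4 : (A + M) i1 p = B i0 p := by
              simp [hM, Matrix.add_apply, hi1, hqp, Ne.symm hqp, (hrow i1 hi1 p).1]
            rw [e1, e2, e3, e4]
            intro heq
            apply hst2
            have h3 : (B i0 q + A i0 q) * A i0 p = B i0 q * A i0 p := by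
              calc (B i0 q + A i0 q) * A i0 p = A i0 p * (B i0 q + A i0 q) := by ring
              _ = A i0 q * B i0 p := heq
              _ = B i0 q * A i0 p := by rw [hpar q p]; ring
            exact hmc _ _ _ hβp h3
        · apply matRank_eq_one_of (a := fun r => if r = i0 ∨ r = i1 then 1 else 0)
            (b := fun s => B i0 s + if s = q then A i0 q else 0)
          · apply mat_ne_zero_of_entry _ i0 q
            have hne : (B i0 q + A i0 q) ≠ 0 := fun h => hδq (zs_of hid _ _ h)
            simpa [hM, Matrix.add_apply] using hne
          · intro i j
            by_cases h0 : i = i0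
            · rw [h0]; simp [hM, Matrix.add_apply]
            · by_cases h1 : i = i1
              · rw [h1]; simp [hM, Matrix.add_apply, hi1, (hrow i1 hi1 j).2]
              · simp [hM, Matrix.add_apply, h0, h1, (hrow i h0 j).2]
    · -- 4b-ii : single nonzero column p
      push_neg at hq
      obtain ⟨q, hqp⟩ : ∃ q : Fin n, q ≠ p :=
        Fintype.exists_ne_of_one_lt_card (by simpa using hn) p
      set M : Matrix (Fin m) (Fin n) S := Matrix.of (fun r s =>
          if (r = i0 ∧ s = q) ∨ (r = i1 ∧ (s = p ∨ s = q)) then A i0 p else 0) with hM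
      refine ⟨M, Or.inl ⟨?_, ?_⟩⟩
      · apply matRank_eq_one_of
          (a := fun r => if r = i0 ∨ r = i1 then A i0 p else 0)
          (b := fun s => if s = p ∨ s = q then 1 else 0)
        · apply mat_ne_zero_of_entry _ i0 p
          simpa [hM, Matrix.add_apply, hqp, Ne.symm hqp, Ne.symm hi1] using hβp
        · intro i j
          by_cases h0 : i = i0
          · rw [h0]
            by_cases hjp : j = p
            · rw [hjp]; simp [hM, Matrix.add_apply, Ne.symm hqp, Ne.symm hi1]
            · by_cases hjq : j = q
              · rw [hjq]; simp [hM, Matrix.add_apply, Ne.symm hi1, (hq q hqp).1]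
              · simp [hM, Matrix.add_apply, Ne.symm hi1, hjp, hjq, (hq j hjp).1]
          · by_cases h1 : i = i1
            · rw [h1]
              simp [hM, Matrix.add_apply, hi1, (hrow i1 hi1 j).1]
            · simp [hM, Matrix.add_apply, h0, h1, (hrow i h0 j).1]
      · apply matRank_eq_two_of
          (w1 := fun r => if r = i0 then 1 else 0)
          (z1 := fun s => B i0 s + if s = q then A i0 p else 0)
          (w2 := fun r => if r = i1 then 1 else 0)
          (z2 := fun s => if s = p ∨ s = q then A i0 p else 0)
          (p := i0) (k := i1) (q := p) (l := q)
        · intro i j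
          by_cases h0 : i = i0
          · rw [h0]; simp [hM, Matrix.add_apply, Ne.symm hi1]
          · by_cases h1 : i = i1
            · rw [h1]; simp [hM, Matrix.add_apply, hi1, (hrow i1 hi1 j).2]
            · simp [hM, Matrix.add_apply, h0, h1, (hrow i h0 j).2]
        · have e1 : (B + M) i0 p = B i0 p := by
            simp [hM, Matrix.add_apply, hqp, Ne.symm hqp, Ne.symm hi1]
          have e2 : (B + M) i1 q = A i0 p := by
            simp [hM, Matrix.add_apply, hi1, (hrow i1 hi1 q).2]
          have e3 : (B + M) i0 q = A i0 p := by
            simp [hM, Matrix.add_apply, Ne.symm hi1, (hq q hqp).2]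
          have e4 : (B + M) i1 p = A i0 p := by
            simp [hM, Matrix.add_apply, hi1, (hrow i1 hi1 p).2]
          rw [e1, e2, e3, e4]
          intro heq
          exact hp (hmc _ _ _ hβp heq).symm
  · -- 4a : non-parallel rows
    push_neg at hpar
    obtain ⟨l, l', hll⟩ := hpar
    obtain ⟨s0, hs0⟩ : ∃ s0, B i0 s0 ≠ 0 := by
      by_contra h
      push_neg at h
      apply hB0
      ext k s
      by_cases hk : k = i0
      · rw [hk]; exact h s
      · exact (hrow k hk s).2
    set M : Matrix (Fin m) (Fin n) S := Matrix.of (fun r s => if r = i1 then B i0 s else 0) with hM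
    refine ⟨M, Or.inr ⟨?_, ?_⟩⟩
    · apply matRank_eq_two_of
        (w1 := fun r => if r = i0 then 1 else 0) (z1 := fun s => A i0 s)
        (w2 := fun r => if r = i1 then 1 else 0) (z2 := fun s => B i0 s)
        (p := i0) (k := i1) (q := l) (l := l')
      · intro i j
        by_cases h0 : i = i0
        · rw [h0]; simp [hM, Matrix.add_apply, Ne.symm hi1]
        · by_cases h1 : i = i1
          · rw [h1]; simp [hM, Matrix.add_apply, hi1, (hrow i1 hi1 j).1]
          · simp [hM, Matrix.add_apply, h0, h1, (hrow i h0 j).1]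
      · have e1 : (A + M) i0 l = A i0 l := by
          simp [hM, Matrix.add_apply, Ne.symm hi1]
        have e2 : (A + M) i1 l' = B i0 l' := by
          simp [hM, Matrix.add_apply, (hrow i1 hi1 l').1]
        have e3 : (A + M) i0 l' = A i0 l' := by
          simp [hM, Matrix.add_apply, Ne.symm hi1]
        have e4 : (A + M) i1 l = B i0 l := by
          simp [hM, Matrix.add_apply, (hrow i1 hi1 l).1]
        rw [e1, e2, e3, e4]
        exact hll
    · apply matRank_eq_one_of (a := fun r => if r = i0 ∨ r = i1 then 1 else 0)
        (b := fun s => B i0 s)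
      · apply mat_ne_zero_of_entry _ i0 s0
        simpa [hM, Matrix.add_apply, Ne.symm hi1] using hs0
      · intro i j
        by_cases h0 : i = i0
        · rw [h0]; simp [hM, Matrix.add_apply, Ne.symm hi1]
        · by_cases h1 : i = i1
          · rw [h1]; simp [hM, Matrix.add_apply, (hrow i1 hi1 j).2]
          · simp [hM, Matrix.add_apply, h0, h1, (hrow i h0 j).2]


lemma step3core
    (hmc : ∀ a b c : S, a ≠ 0 → b * a = c * a → b = c)
    (A B : Matrix (Fin m) (Fin n) S)
    (a : Fin m → S) (b : Fin n → S) (c : Fin m → S) (d : Fin n → S)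
    (hAo : ∀ i j, A i j = a i * b j) (hBo : ∀ i j, B i j = c i * d j)
    (hB0 : B ≠ 0)
    (hnnz : nnz A = nnz B)
    (p : Fin m) (q : Fin n) (hw : A p q + B p q ≠ A p q)
    (HA : ∀ p q, A p q + B p q ≠ A p q → ∀ k l, k ≠ p → l ≠ q → A k l = 0)
    (HB : ∀ p q, B p q + A p q ≠ B p q → ∀ k l, k ≠ p → l ≠ q → B k l = 0) :
    (∃ i0, ∀ k, k ≠ i0 → ∀ l, A k l = 0 ∧ B k l = 0) ∨
    (∃ j0, ∀ l, l ≠ j0 → ∀ k, A k l = 0 ∧ B k l = 0) := by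
  have hKA := HA p q hw
  have hconfA := confine hmc A a b hAo p q hKA
  rcases hconfA with hrowA | hcolA
  · -- A is confined to row p
    by_cases hWB : ∃ r s, B r s + A r s ≠ B r s
    · obtain ⟨r, s, hw2⟩ := hWB
      have hArs : A r s ≠ 0 := fun h0 => hw2 (by rw [h0, add_zero])
      have hrp : r = p := by
        by_contra hrp
        exact hArs (hrowA r hrp s)
      rw [hrp] at hw2
      rcases confine hmc B c d hBo p s (HB p s hw2) with hrowB | hcolB
      · exact Or.inl ⟨p, fun k hk l => ⟨hrowA k hk l, hrowB k hk l⟩⟩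
      · -- B is confined to column s
        by_cases hAl : ∃ l, l ≠ s ∧ A p l ≠ 0
        · obtain ⟨l, hls, hApl⟩ := hAl
          have hBpl : B p l = 0 := hcolB l hls p
          have hw3 : B p l + A p l ≠ B p l := by
            rw [hBpl, zero_add]
            exact hApl
          rcases confine hmc B c d hBo p l (HB p l hw3) with hrowB' | hcolB'
          · exact Or.inl ⟨p, fun k hk l' => ⟨hrowA k hk l', hrowB' k hk l'⟩⟩
          · exfalso
            apply hB0
            ext k' l'
            by_cases hl's : l' = s
            · rw [hl's]
              exact hcolB' s (fun h => hls h.symm) k'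
            · exact hcolB l' hl's k'
        · push_neg at hAl
          refine Or.inr ⟨s, fun l hl k => ⟨?_, hcolB l hl k⟩⟩
          by_cases hk : k = p
          · rw [hk]; exact hAl l hl
          · exact hrowA k hk l
    · push_neg at hWB
      have hsuppAB : ∀ k l, A k l ≠ 0 → B k l ≠ 0 := by
        intro k l hA' hB'
        apply hA'
        have h2 := hWB k l
        rwa [hB', zero_add] at h2
      have hsuppBA := supp_reverse A B hnnz hsuppAB
      refine Or.inl ⟨p, fun k hk l => ⟨hrowA k hk l, ?_⟩⟩
      by_contra hB'
      exact (hsuppBA k l hB') (hrowA k hk l)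
  · -- A is confined to column q
    by_cases hWB : ∃ r s, B r s + A r s ≠ B r s
    · obtain ⟨r, s, hw2⟩ := hWB
      have hArs : A r s ≠ 0 := fun h0 => hw2 (by rw [h0, add_zero])
      have hsq : s = q := by
        by_contra hsq
        exact hArs (hcolA s hsq r)
      rw [hsq] at hw2
      rcases confine hmc B c d hBo r q (HB r q hw2) with hrowB | hcolB
      · -- B confined to row r
        by_cases hAk : ∃ k, k ≠ r ∧ A k q ≠ 0
        · obtain ⟨k, hkr, hAkq⟩ := hAk
          have hBkq : B k q = 0 := hrowB k hkr q
          have hw3 : B k q + A k q ≠ B k q := by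
            rw [hBkq, zero_add]
            exact hAkq
          rcases confine hmc B c d hBo k q (HB k q hw3) with hrowB' | hcolB'
          · exfalso
            apply hB0
            ext k' l'
            by_cases hk'r : k' = r
            · rw [hk'r]
              exact hrowB' r (fun h => hkr h.symm) l'
            · exact hrowB k' hk'r l'
          · exact Or.inr ⟨q, fun l hl k' => ⟨hcolA l hl k', hcolB' l hl k'⟩⟩
        · push_neg at hAk
          refine Or.inl ⟨r, fun k hk l => ⟨?_, hrowB k hk l⟩⟩
          by_cases hl : l = q
          · rw [hl]; exact hAk k hk
          · exact hcolA l hl k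
      · exact Or.inr ⟨q, fun l hl k => ⟨hcolA l hl k, hcolB l hl k⟩⟩
    · push_neg at hWB
      have hsuppAB : ∀ k l, A k l ≠ 0 → B k l ≠ 0 := by
        intro k l hA' hB'
        apply hA'
        have h2 := hWB k l
        rwa [hB', zero_add] at h2
      have hsuppBA := supp_reverse A B hnnz hsuppAB
      refine Or.inr ⟨q, fun l hl k => ⟨hcolA l hl k, ?_⟩⟩
      by_contra hB'
      exact (hsuppBA k l hB') (hcolA l hl k)


end Helpers

theorem stmt14 {S : Type*} [CommSemiring S]
    (haddidem : ∀ a : S, a + a = a)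
    (hmc : ∀ a b c : S, a ≠ 0 → b * a = c * a → b = c)
    (haui : ∀ a b : S, IsUnit (a + b) → IsUnit a ∨ IsUnit b)
    {m n : ℕ} (hm : 1 < m) (hn : 1 < n)
    (A B : Matrix (Fin m) (Fin n) S) (hAB : A ≠ B)
    (hA : matRank A = 1) (hB : matRank B = 1)
    (hnnz : nnz A = nnz B) :
    ∃ C : Matrix (Fin m) (Fin n) S,
      (matRank (A + C) = 1 ∧ matRank (B + C) = 2) ∨
      (matRank (A + C) = 2 ∧ matRank (B + C) = 1) := by
  obtain ⟨hA0, a, b, hAo⟩ := exists_outer_of_matRank_eq_one hA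
  obtain ⟨hB0, c, d, hBo⟩ := exists_outer_of_matRank_eq_one hB
  -- Step 1: single-entry construction for the (A,B) orientation
  by_cases hS1 : ∃ (p : Fin m) (q : Fin n) (k : Fin m) (l : Fin n),
      (A p q + B p q ≠ A p q) ∧ k ≠ p ∧ l ≠ q ∧ A k l ≠ 0
  · obtain ⟨p, q, k, l, hw, hkp, hlq, hkl⟩ := hS1
    set M : Matrix (Fin m) (Fin n) S :=
      Matrix.of (fun r s => if r = p ∧ s = q then B p q else 0) with hM
    refine ⟨M, Or.inr ⟨?_, ?_⟩⟩
    · apply matRank_eq_two_of (w1 := a) (z1 := b)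
        (w2 := fun r => if r = p then B p q else 0)
        (z2 := fun s => if s = q then 1 else 0)
        (p := p) (k := k) (q := q) (l := l)
      · intro i j
        by_cases hip : i = p
        · by_cases hjq : j = q
          · rw [hip, hjq]; simp [hM, Matrix.add_apply, hAo p q]
          · rw [hip]; simp [hM, Matrix.add_apply, hjq, hAo p j]
        · simp [hM, Matrix.add_apply, hip, hAo i j]
      · have e1 : (A + M) p q = A p q + B p q := by simp [hM, Matrix.add_apply]
        have e2 : (A + M) k l = A k l := by simp [hM, Matrix.add_apply, hkp]
        have e3 : (A + M) p l = A p l := by simp [hM, Matrix.add_apply, hlq]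
        have e4 : (A + M) k q = A k q := by simp [hM, Matrix.add_apply, hkp]
        rw [e1, e2, e3, e4]
        intro heq
        apply hw
        have hcross : A p l * A k q = A p q * A k l := by
          rw [hAo p l, hAo k q, hAo p q, hAo k l]; ring
        rw [hcross] at heq
        exact hmc _ _ _ hkl heq
    · have hBM : B + M = B := by
        ext r s
        by_cases hrs : r = p ∧ s = q
        · rw [hrs.1, hrs.2]
          simp [hM, Matrix.add_apply, haddidem]
        · simp [hM, Matrix.add_apply, hrs]
      rw [hBM]
      exact hB
  · -- Step 2: single-entry construction for the (B,A) orientation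
    by_cases hS2 : ∃ (p : Fin m) (q : Fin n) (k : Fin m) (l : Fin n),
        (B p q + A p q ≠ B p q) ∧ k ≠ p ∧ l ≠ q ∧ B k l ≠ 0
    · obtain ⟨p, q, k, l, hw, hkp, hlq, hkl⟩ := hS2
      set M : Matrix (Fin m) (Fin n) S :=
        Matrix.of (fun r s => if r = p ∧ s = q then A p q else 0) with hM
      refine ⟨M, Or.inl ⟨?_, ?_⟩⟩
      · have hAM : A + M = A := by
          ext r s
          by_cases hrs : r = p ∧ s = q
          · rw [hrs.1, hrs.2]
            simp [hM, Matrix.add_apply, haddidem]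
          · simp [hM, Matrix.add_apply, hrs]
        rw [hAM]
        exact hA
      · apply matRank_eq_two_of (w1 := c) (z1 := d)
          (w2 := fun r => if r = p then A p q else 0)
          (z2 := fun s => if s = q then 1 else 0)
          (p := p) (k := k) (q := q) (l := l)
        · intro i j
          by_cases hip : i = p
          · by_cases hjq : j = q
            · rw [hip, hjq]; simp [hM, Matrix.add_apply, hBo p q]
            · rw [hip]; simp [hM, Matrix.add_apply, hjq, hBo p j]
          · simp [hM, Matrix.add_apply, hip, hBo i j]
        · have e1 : (B + M) p q = B p q + A p q := by simp [hM, Matrix.add_apply]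
          have e2 : (B + M) k l = B k l := by simp [hM, Matrix.add_apply, hkp]
          have e3 : (B + M) p l = B p l := by simp [hM, Matrix.add_apply, hlq]
          have e4 : (B + M) k q = B k q := by simp [hM, Matrix.add_apply, hkp]
          rw [e1, e2, e3, e4]
          intro heq
          apply hw
          have hcross : B p l * B k q = B p q * B k l := by
            rw [hBo p l, hBo k q, hBo p q, hBo k l]; ring
          rw [hcross] at heq
          exact hmc _ _ _ hkl heq
    · -- Step 3: both matrices confined to a common row or column
      have HA : ∀ p q, A p q + B p q ≠ A p q → ∀ k l, k ≠ p → l ≠ q → A k l = 0 := by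
        intro p q hw k l hk hl
        by_contra h0
        exact hS1 ⟨p, q, k, l, hw, hk, hl, h0⟩
      have HB : ∀ p q, B p q + A p q ≠ B p q → ∀ k l, k ≠ p → l ≠ q → B k l = 0 := by
        intro p q hw k l hk hl
        by_contra h0
        exact hS2 ⟨p, q, k, l, hw, hk, hl, h0⟩
      obtain ⟨p0, q0, hpq⟩ : ∃ p q, A p q ≠ B p q := by
        by_contra h
        push_neg at h
        exact hAB (by ext i j; exact h i j)
      have horient : (A p0 q0 + B p0 q0 ≠ A p0 q0) ∨ (B p0 q0 + A p0 q0 ≠ B p0 q0) := by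
        by_contra h
        push_neg at h
        apply hpq
        calc A p0 q0 = A p0 q0 + B p0 q0 := h.1.symm
        _ = B p0 q0 + A p0 q0 := by ring
        _ = B p0 q0 := h.2
      have h3 : (∃ i0, ∀ k, k ≠ i0 → ∀ l, A k l = 0 ∧ B k l = 0) ∨
          (∃ j0, ∀ l, l ≠ j0 → ∀ k, A k l = 0 ∧ B k l = 0) := by
        rcases horient with h1 | h2
        · exact step3core hmc A B a b c d hAo hBo hB0 hnnz p0 q0 h1 HA HB
        · have hres := step3core hmc B A c d a b hBo hAo hA0 hnnz.symm p0 q0 h2 HB HA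
          refine hres.imp ?_ ?_
          · rintro ⟨i0, h⟩
            exact ⟨i0, fun k hk l => ⟨(h k hk l).2, (h k hk l).1⟩⟩
          · rintro ⟨j0, h⟩
            exact ⟨j0, fun l hl k => ⟨(h l hl k).2, (h l hl k).1⟩⟩
      rcases h3 with ⟨i0, hrow⟩ | ⟨j0, hcol⟩
      · exact step4row haddidem hmc hm hn A B hA hB hAB i0 hrow
      · have hABt : Aᵀ ≠ Bᵀ := fun h => hAB (by
          rw [← Matrix.transpose_transpose A, h, Matrix.transpose_transpose])
        have h4 := step4row haddidem hmc hn hm Aᵀ Bᵀ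
          (by rw [matRank_transpose]; exact hA)
          (by rw [matRank_transpose]; exact hB)
          hABt j0 (fun l hl k => hcol l hl k)
        obtain ⟨C', hC'⟩ := h4
        refine ⟨C'ᵀ, ?_⟩
        have e1 : A + C'ᵀ = (Aᵀ + C')ᵀ := by
          rw [Matrix.transpose_add, Matrix.transpose_transpose]
        have e2 : B + C'ᵀ = (Bᵀ + C')ᵀ := by
          rw [Matrix.transpose_add, Matrix.transpose_transpose]
        rw [e1, e2, matRank_transpose, matRank_transpose]
        exact hC'
end
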